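/- arXiv:1710.04958 — 2 statements merged into one kernel-verified Lean document; each statement's English description precedes it below -/
import Mathlib

section
/- Let b < B be real numbers and X a Banach space over any scalar field K, 1<p<∞. Then max{ ((B-b)/2)·β_{p,X}^{\{-1,1\}}, |b|, |B| } ≤ β_{p,X}^{\{b,B\}} ≤ ((B-b)/2)·β_{p,X}^{\{-1,1\}} + |B+b|/2. -/
open MeasureTheory Filter Set
open scoped ENNReal NNReal Topology

/-- The martingale difference sequence of `f`, with the convention `mdiff f 0 = f 0`. -/
noncomputable def mdiff {Ω X : Type} [AddGroup X] (f : ℕ → Ω → X) : ℕ → Ω → X :=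
  fun n => if n = 0 then f 0 else f n - f (n - 1)

/-- `β` is an admissible constant for the `UMD_p^A` martingale-transform inequality on `X`:
for every probability space, every filtration, every `X`-valued `L^p`-martingale `f` and every
`A`-valued (deterministic) sequence `(ε_n)`, the transformed martingale
`∑_{k=0}^{N} ε_k d f_k` satisfies the `L^p` bound with constant `β`. -/
def UMDAdmissible (𝕜 : Type) [RCLike 𝕜] (X : Type) [NormedAddCommGroup X]
    [NormedSpace 𝕜 X] [NormedSpace ℝ X] [CompleteSpace X] (p : ℝ) (A : Set 𝕜)
    (β : ℝ≥0∞) : Prop :=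
  ∀ (Ω : Type) (m : MeasurableSpace Ω) (μ : Measure Ω), IsProbabilityMeasure μ →
    ∀ (ℱ : Filtration ℕ m) (f : ℕ → Ω → X), Martingale f ℱ μ →
    (∀ n, MemLp (f n) (ENNReal.ofReal p) μ) →
    ∀ (N : ℕ) (ε : ℕ → 𝕜), (∀ n, ε n ∈ A) →
    eLpNorm (fun ω => ∑ k ∈ Finset.range (N + 1), ε k • mdiff f k ω)
        (ENNReal.ofReal p) μ ≤ β * eLpNorm (f N) (ENNReal.ofReal p) μ

/-- The `UMD_p^A` constant `β_{p,X}^A ∈ [0,∞]` of `X`. -/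
noncomputable def umdConst (𝕜 : Type) [RCLike 𝕜] (X : Type) [NormedAddCommGroup X]
    [NormedSpace 𝕜 X] [NormedSpace ℝ X] [CompleteSpace X] (p : ℝ) (A : Set 𝕜) : ℝ≥0∞ :=
  sInf {β : ℝ≥0∞ | UMDAdmissible 𝕜 X p A β}

/-!
An `{b, B}`-valued sequence is `ε = (B - b)/2 • σ + (B + b)/2` with `σ` a sign sequence, so its
transform is `(B - b)/2` times a `±1`-transform plus `(B + b)/2 • f_N`; the triangle inequality
gives the upper bound. Conversely every sign sequence is `(ε - ε')/(B - b)` with `ε, ε'`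
`{b, B}`-valued, which gives `(B - b)/2 · β^{±1} ≤ β^{b,B}`. Testing on a constant martingale
gives `|b|, |B| ≤ β^{b,B}`.
-/

theorem RCLike.enorm_ofReal {𝕜 : Type} [RCLike 𝕜] (r : ℝ) :
    ‖(r : 𝕜)‖ₑ = ENNReal.ofReal |r| := by
  rw [← ofReal_norm, RCLike.norm_ofReal]

theorem sum_range_succ_mdiff {Ω X : Type} [AddCommGroup X] (f : ℕ → Ω → X) (N : ℕ) :
    ∑ k ∈ Finset.range (N + 1), mdiff f k = f N := by
  induction N with
  | zero => simp [mdiff]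
  | succ n ih => rw [Finset.sum_range_succ, ih]; simp [mdiff]

section MartingaleTransform

variable {Ω X 𝕜 : Type}

noncomputable def martingaleTransform [AddCommGroup X] [SMul 𝕜 X] (ε : ℕ → 𝕜)
    (f : ℕ → Ω → X) (N : ℕ) : Ω → X :=
  fun ω => ∑ k ∈ Finset.range (N + 1), ε k • mdiff f k ω

section Algebra

variable [Ring 𝕜] [AddCommGroup X] [Module 𝕜 X]

theorem martingaleTransform_affine (a c : 𝕜) (σ : ℕ → 𝕜) (f : ℕ → Ω → X) (N : ℕ) :
    martingaleTransform (fun k => a * σ k + c) f N = a • martingaleTransform σ f N + c • f N := by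
  rw [← sum_range_succ_mdiff f N]
  ext ω
  simp [martingaleTransform, Finset.smul_sum, ← Finset.sum_add_distrib, add_smul, mul_smul]

theorem martingaleTransform_smul_sub (a : 𝕜) (ε ε' : ℕ → 𝕜) (f : ℕ → Ω → X) (N : ℕ) :
    martingaleTransform (fun k => a * (ε k - ε' k)) f N =
      a • (martingaleTransform ε f N - martingaleTransform ε' f N) := by
  ext ω
  simp [martingaleTransform, Finset.smul_sum, ← Finset.sum_sub_distrib, sub_smul, mul_smul]

end Algebra

variable [RCLike 𝕜] [NormedAddCommGroup X] [NormedSpace 𝕜 X]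

theorem aestronglyMeasurable_martingaleTransform {m : MeasurableSpace Ω} {μ : Measure Ω}
    {f : ℕ → Ω → X} (hf : ∀ n, AEStronglyMeasurable (f n) μ) (ε : ℕ → 𝕜) (N : ℕ) :
    AEStronglyMeasurable (martingaleTransform ε f N) μ := by
  refine Finset.aestronglyMeasurable_fun_sum _ fun k _ => AEStronglyMeasurable.const_smul ?_ _
  rcases k with _ | k
  · simpa [mdiff] using hf 0
  · simpa [mdiff] using (hf (k + 1)).sub (hf k)

theorem Martingale.martingaleTransform_ae_eq_zero [NormedSpace ℝ X] [CompleteSpace X]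
    {m : MeasurableSpace Ω} {μ : Measure Ω} {ℱ : Filtration ℕ m} {f : ℕ → Ω → X}
    (hf : Martingale f ℱ μ) {N : ℕ} (hN : f N =ᵐ[μ] 0) (ε : ℕ → 𝕜) :
    martingaleTransform ε f N =ᵐ[μ] 0 := by
  have hvanish : ∀ n, ∀ᵐ ω ∂μ, n ≤ N → f n ω = 0 := by
    intro n
    by_cases hn : n ≤ N
    · have h : f n =ᵐ[μ] 0 := (hf.condExp_ae_eq hn).symm.trans
        ((condExp_congr_ae hN).trans (by rw [condExp_zero]))
      filter_upwards [h] with ω hω _ using hω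
    · exact Eventually.of_forall fun _ h => absurd h hn
  filter_upwards [ae_all_iff.2 hvanish] with ω hω
  refine Finset.sum_eq_zero fun k hk => ?_
  have hkN : k ≤ N := Nat.lt_succ_iff.1 (Finset.mem_range.1 hk)
  rcases k with _ | k
  · simp [mdiff, hω 0 hkN]
  · simp [mdiff, hω (k + 1) hkN, hω k (by omega)]

end MartingaleTransform

section UMD

variable {𝕜 X : Type} [RCLike 𝕜] [NormedAddCommGroup X] [NormedSpace 𝕜 X] [NormedSpace ℝ X]
  [CompleteSpace X] {p : ℝ} {A A' : Set 𝕜} {β : ℝ≥0∞}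

theorem UMDAdmissible.umdConst_le (hβ : UMDAdmissible 𝕜 X p A β) : umdConst 𝕜 X p A ≤ β :=
  sInf_le hβ

theorem umdAdmissible_umdConst (hp : 0 < p) (A : Set 𝕜) :
    UMDAdmissible 𝕜 X p A (umdConst 𝕜 X p A) := by
  intro Ω m μ hμ ℱ f hf hfp N ε hε
  have hq : ENNReal.ofReal p ≠ 0 := ENNReal.ofReal_ne_zero_iff.2 hp
  have hfin : eLpNorm (f N) (ENNReal.ofReal p) μ ≠ ⊤ := (hfp N).2.ne
  by_cases h0 : eLpNorm (f N) (ENNReal.ofReal p) μ = 0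
  · have hN : f N =ᵐ[μ] 0 := (eLpNorm_eq_zero_iff (hfp N).1 hq).1 h0
    rw [h0, mul_zero]
    exact ((eLpNorm_congr_ae (Martingale.martingaleTransform_ae_eq_zero hf hN ε)).trans
      eLpNorm_zero).le
  · rw [← ENNReal.div_le_iff_le_mul (Or.inl h0) (Or.inl hfin)]
    refine le_sInf fun β hβ => ?_
    rw [ENNReal.div_le_iff_le_mul (Or.inl h0) (Or.inl hfin)]
    exact hβ Ω m μ hμ ℱ f hf hfp N ε hε

/-- Tested on a constant martingale `d_0 = x ≠ 0`, the inequality reads `‖a‖ ‖x‖ ≤ β ‖x‖`. -/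
theorem UMDAdmissible.enorm_le [Nontrivial X] (hp : 0 < p) (hβ : UMDAdmissible 𝕜 X p A β)
    {a : 𝕜} (ha : a ∈ A) : ‖a‖ₑ ≤ β := by
  obtain ⟨x, hx⟩ := exists_ne (0 : X)
  let ℱ : Filtration ℕ (⊤ : MeasurableSpace Unit) := ⟨fun _ => ⊤, monotone_const, fun _ => le_rfl⟩
  have hmart : Martingale (fun _ _ => x) ℱ (Measure.dirac ()) :=
    martingale_const ℱ _ x
  have key := hβ Unit ⊤ (Measure.dirac ()) inferInstance ℱ _ hmart (fun _ => memLp_const x) 0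
    (fun _ => a) (fun _ => ha)
  have hq : ENNReal.ofReal p ≠ 0 := ENNReal.ofReal_ne_zero_iff.2 hp
  simp only [zero_add, Finset.range_one, Finset.sum_singleton, mdiff, if_true] at key
  rw [eLpNorm_const _ hq (NeZero.ne _), eLpNorm_const _ hq (NeZero.ne _), enorm_smul] at key
  simp only [measure_univ, ENNReal.one_rpow, mul_one] at key
  exact (ENNReal.mul_le_mul_iff_left (enorm_ne_zero.2 hx) enorm_ne_top).1 key

theorem UMDAdmissible.of_affine (hp : 1 ≤ p) (hβ : UMDAdmissible 𝕜 X p A β) (a c : 𝕜)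
    (hA' : ∀ e ∈ A', ∃ s ∈ A, e = a * s + c) :
    UMDAdmissible 𝕜 X p A' (‖a‖ₑ * β + ‖c‖ₑ) := by
  intro Ω m μ hμ ℱ f hf hfp N ε hε
  choose σ hσ hεσ using fun k => hA' (ε k) (hε k)
  have hq : 1 ≤ ENNReal.ofReal p := ENNReal.one_le_ofReal.2 hp
  change eLpNorm (martingaleTransform ε f N) _ μ ≤ _
  rw [show ε = fun k => a * σ k + c from funext hεσ, martingaleTransform_affine]
  calc _ ≤ ‖a‖ₑ * eLpNorm (martingaleTransform σ f N) (ENNReal.ofReal p) μ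
        + ‖c‖ₑ * eLpNorm (f N) (ENNReal.ofReal p) μ := by
        rw [← eLpNorm_const_smul, ← eLpNorm_const_smul]
        exact eLpNorm_add_le
          ((aestronglyMeasurable_martingaleTransform (fun n => (hfp n).1) σ N).const_smul a)
          ((hfp N).1.const_smul c) hq
    _ ≤ ‖a‖ₑ * (β * eLpNorm (f N) (ENNReal.ofReal p) μ)
        + ‖c‖ₑ * eLpNorm (f N) (ENNReal.ofReal p) μ := by
        gcongr
        exact hβ Ω m μ hμ ℱ f hf hfp N σ hσ
    _ = (‖a‖ₑ * β + ‖c‖ₑ) * eLpNorm (f N) (ENNReal.ofReal p) μ := by ring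

theorem UMDAdmissible.of_smul_sub (hp : 1 ≤ p) (hβ : UMDAdmissible 𝕜 X p A β) (a : 𝕜)
    (hA' : ∀ s ∈ A', ∃ e ∈ A, ∃ e' ∈ A, s = a * (e - e')) :
    UMDAdmissible 𝕜 X p A' (2 * ‖a‖ₑ * β) := by
  intro Ω m μ hμ ℱ f hf hfp N σ hσ
  choose ε hε ε' hε' hσε using fun k => hA' (σ k) (hσ k)
  have hq : 1 ≤ ENNReal.ofReal p := ENNReal.one_le_ofReal.2 hp
  have hmeas := aestronglyMeasurable_martingaleTransform (fun n => (hfp n).1) (𝕜 := 𝕜)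
  change eLpNorm (martingaleTransform σ f N) _ μ ≤ _
  rw [show σ = fun k => a * (ε k - ε' k) from funext hσε, martingaleTransform_smul_sub,
    eLpNorm_const_smul]
  calc _ ≤ ‖a‖ₑ * (eLpNorm (martingaleTransform ε f N) (ENNReal.ofReal p) μ
        + eLpNorm (martingaleTransform ε' f N) (ENNReal.ofReal p) μ) := by
        gcongr
        exact eLpNorm_sub_le (hmeas ε N) (hmeas ε' N) hq
    _ ≤ ‖a‖ₑ * (β * eLpNorm (f N) (ENNReal.ofReal p) μ
        + β * eLpNorm (f N) (ENNReal.ofReal p) μ) := by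
        gcongr
        · exact hβ Ω m μ hμ ℱ f hf hfp N ε hε
        · exact hβ Ω m μ hμ ℱ f hf hfp N ε' hε'
    _ = 2 * ‖a‖ₑ * β * eLpNorm (f N) (ENNReal.ofReal p) μ := by ring

end UMD

section RealPair

variable {𝕜 X : Type} [RCLike 𝕜] [NormedAddCommGroup X] [NormedSpace 𝕜 X] [NormedSpace ℝ X]
  [CompleteSpace X] {p b B : ℝ}

theorem umdConst_real_pair_le (hp : 1 ≤ p) (hbB : b < B) :
    umdConst 𝕜 X p {(b : 𝕜), (B : 𝕜)} ≤
      ENNReal.ofReal ((B - b) / 2) * umdConst 𝕜 X p {-1, 1} + ENNReal.ofReal (|B + b| / 2) := by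
  have haffine : ∀ e ∈ ({(b : 𝕜), (B : 𝕜)} : Set 𝕜), ∃ s ∈ ({-1, 1} : Set 𝕜),
      e = (((B - b) / 2 : ℝ) : 𝕜) * s + (((B + b) / 2 : ℝ) : 𝕜) := by
    rintro e (rfl | rfl | -)
    · exact ⟨-1, by simp, by push_cast; ring⟩
    · exact ⟨1, by simp, by push_cast; ring⟩
  have h := ((umdAdmissible_umdConst (X := X) (zero_lt_one.trans_le hp) _).of_affine hp _ _
    haffine).umdConst_le
  rwa [RCLike.enorm_ofReal, RCLike.enorm_ofReal, abs_of_pos (half_pos (sub_pos.2 hbB)), abs_div,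
    abs_two] at h

theorem UMDAdmissible.half_sub_mul_umdConst_signs_le (hp : 1 ≤ p) (hbB : b < B) {β : ℝ≥0∞}
    (hβ : UMDAdmissible 𝕜 X p {(b : 𝕜), (B : 𝕜)} β) :
    ENNReal.ofReal ((B - b) / 2) * umdConst 𝕜 X p {-1, 1} ≤ β := by
  have hBb : 0 < B - b := sub_pos.2 hbB
  have hsigns : ∀ s ∈ ({-1, 1} : Set 𝕜), ∃ e ∈ ({(b : 𝕜), (B : 𝕜)} : Set 𝕜),
      ∃ e' ∈ ({(b : 𝕜), (B : 𝕜)} : Set 𝕜), s = (((B - b)⁻¹ : ℝ) : 𝕜) * (e - e') := by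
    rintro s (rfl | rfl | -)
    · refine ⟨b, by simp, B, by simp, ?_⟩
      exact_mod_cast (by field_simp; ring : (B - b)⁻¹ * (b - B) = -1).symm
    · refine ⟨B, by simp, b, by simp, ?_⟩
      exact_mod_cast (by field_simp : (B - b)⁻¹ * (B - b) = 1).symm
  have h := (hβ.of_smul_sub hp _ hsigns).umdConst_le
  rw [RCLike.enorm_ofReal, abs_of_pos (inv_pos.2 hBb)] at h
  calc ENNReal.ofReal ((B - b) / 2) * umdConst 𝕜 X p {-1, 1}
      ≤ ENNReal.ofReal ((B - b) / 2) * (2 * ENNReal.ofReal (B - b)⁻¹ * β) := by gcongr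
    _ = ENNReal.ofReal ((B - b) / 2 * (2 * (B - b)⁻¹)) * β := by
        rw [ENNReal.ofReal_mul (by positivity), ENNReal.ofReal_mul zero_le_two,
          ENNReal.ofReal_ofNat]
        ring
    _ = β := by
        rw [show (B - b) / 2 * (2 * (B - b)⁻¹) = 1 by field_simp, ENNReal.ofReal_one, one_mul]

end RealPair

theorem umdConst_pair_real_bounds (𝕜 : Type) [RCLike 𝕜] (X : Type) [NormedAddCommGroup X]
    [NormedSpace 𝕜 X] [NormedSpace ℝ X] [CompleteSpace X] (p : ℝ) (hp : 1 < p)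
    [Nontrivial X] (b B : ℝ) (hbB : b < B) :
    max (max (ENNReal.ofReal ((B - b) / 2) * umdConst 𝕜 X p {-1, 1})
        (ENNReal.ofReal |b|)) (ENNReal.ofReal |B|)
      ≤ umdConst 𝕜 X p {(b : 𝕜), (B : 𝕜)} ∧
    umdConst 𝕜 X p {(b : 𝕜), (B : 𝕜)} ≤
      ENNReal.ofReal ((B - b) / 2) * umdConst 𝕜 X p {-1, 1} +
        ENNReal.ofReal (|B + b| / 2) := by
  have hp0 : 0 < p := zero_lt_one.trans hp
  refine ⟨le_sInf fun β hβ => max_le (max_le ?_ ?_) ?_, umdConst_real_pair_le hp.le hbB⟩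
  · exact hβ.half_sub_mul_umdConst_signs_le hp.le hbB
  · simpa [RCLike.enorm_ofReal] using hβ.enorm_le hp0 (mem_insert _ _)
  · simpa [RCLike.enorm_ofReal] using hβ.enorm_le hp0 (mem_insert_of_mem _ rfl)
end

section
/- Let X be a Banach space, 1<p<∞, and A ⊆ K bounded containing at least two points. Then β_{p,X}^A is finite if and only if the UMD constant β_{p,X} is finite (i.e. if and only if X has the UMD property). -/
open MeasureTheory Filter Set
open scoped ENNReal NNReal Topology

/-!
For a fixed `L^p` martingale, `ε ↦ ‖∑ ε_k d_k‖_p` is a seminorm of the coefficient vector, so an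
estimate for coefficients in `B` persists for coefficients in the convex hull of `B` (the convex
hull of a product of sets is the product of the convex hulls). The estimate also scales under
`B ↦ c • B` and, since `∑_{k ≤ N} d_k = f_N`, survives a translation `B ↦ c + B` at the price of
an extra `‖c‖`.

If `A` lies in the closed ball of radius `M`, it lies in the convex hull of the circle of radius
`M`, a dilate of the unit circle. Conversely, two points `a ≠ b` of `A` are mapped affinely onto
the signs `±1`, whose convex hull contains the real interval `[-1, 1]`, and a unimodular `ε`
splits as `Re ε + i Im ε` with both parts in that interval.
-/

open scoped Pointwise

theorem sum_range_mdiff {Ω X : Type} [AddCommGroup X] (f : ℕ → Ω → X) (N : ℕ) :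
    (fun ω => ∑ k ∈ Finset.range (N + 1), mdiff f k ω) = f N := by
  funext ω
  induction N with
  | zero => simp [mdiff]
  | succ n ih =>
    rw [Finset.sum_range_succ, ih]
    simp [mdiff]

theorem aestronglyMeasurable_mdiff {Ω X : Type} [NormedAddCommGroup X] {m : MeasurableSpace Ω}
    {μ : Measure Ω} {f : ℕ → Ω → X} (hf : ∀ n, AEStronglyMeasurable (f n) μ) (k : ℕ) :
    AEStronglyMeasurable (mdiff f k) μ := by
  unfold mdiff
  split
  · exact hf 0
  · exact (hf k).sub (hf (k - 1))

theorem RCLike.enorm_ofReal_of_nonneg {𝕜 : Type*} [RCLike 𝕜] {t : ℝ} (ht : 0 ≤ t) :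
    ‖(t : 𝕜)‖ₑ = ENNReal.ofReal t := by
  rw [← ofReal_norm, RCLike.norm_ofReal, abs_of_nonneg ht]

section Transforms

variable {𝕜 : Type*} [RCLike 𝕜] {X : Type*} [NormedAddCommGroup X] [NormedSpace 𝕜 X]
  {Ω : Type*} {m : MeasurableSpace Ω} {μ : Measure Ω} {ι : Type*}

theorem aestronglyMeasurable_sum_smul (s : Finset ι) {g : ι → Ω → X}
    (hg : ∀ k, AEStronglyMeasurable (g k) μ) (η : ι → 𝕜) :
    AEStronglyMeasurable (fun ω => ∑ k ∈ s, η k • g k ω) μ :=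
  Finset.aestronglyMeasurable_fun_sum _ fun k _ => (hg k).const_smul (η k)

theorem convex_setOf_eLpNorm_sum_smul_le (s : Finset ι) {g : ι → Ω → X}
    (hg : ∀ k, AEStronglyMeasurable (g k) μ) {p : ℝ≥0∞} (hp : 1 ≤ p) (C : ℝ≥0∞) :
    Convex ℝ {η : ι → 𝕜 | eLpNorm (fun ω => ∑ k ∈ s, η k • g k ω) p μ ≤ C} := by
  intro η₁ hη₁ η₂ hη₂ a b ha hb hab
  set T : (ι → 𝕜) → Ω → X := fun η ω => ∑ k ∈ s, η k • g k ω
  have hsplit : T (a • η₁ + b • η₂) = (a : 𝕜) • T η₁ + (b : 𝕜) • T η₂ := by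
    funext ω
    simp [T, RCLike.real_smul_eq_coe_mul, add_smul, mul_smul, Finset.smul_sum,
      Finset.sum_add_distrib]
  calc eLpNorm (T (a • η₁ + b • η₂)) p μ
      ≤ ‖(a : 𝕜)‖ₑ * eLpNorm (T η₁) p μ + ‖(b : 𝕜)‖ₑ * eLpNorm (T η₂) p μ := by
        rw [hsplit, ← eLpNorm_const_smul, ← eLpNorm_const_smul]
        exact eLpNorm_add_le ((aestronglyMeasurable_sum_smul s hg η₁).const_smul _)
          ((aestronglyMeasurable_sum_smul s hg η₂).const_smul _) hp
    _ ≤ ENNReal.ofReal a * C + ENNReal.ofReal b * C := by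
        rw [RCLike.enorm_ofReal_of_nonneg ha, RCLike.enorm_ofReal_of_nonneg hb]
        gcongr
        exacts [hη₁, hη₂]
    _ = C := by rw [← add_mul, ← ENNReal.ofReal_add ha hb, hab, ENNReal.ofReal_one, one_mul]

theorem eLpNorm_sum_smul_le_of_mem_convexHull [Fintype ι] {g : ι → Ω → X}
    (hg : ∀ k, AEStronglyMeasurable (g k) μ) {p : ℝ≥0∞} (hp : 1 ≤ p) {B : Set 𝕜} {C : ℝ≥0∞}
    (hB : ∀ η : ι → 𝕜, (∀ k, η k ∈ B) → eLpNorm (fun ω => ∑ k, η k • g k ω) p μ ≤ C)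
    {η : ι → 𝕜} (hη : ∀ k, η k ∈ convexHull ℝ B) :
    eLpNorm (fun ω => ∑ k, η k • g k ω) p μ ≤ C :=
  convexHull_min (fun η hη => hB η (Set.mem_univ_pi.mp hη))
    (convex_setOf_eLpNorm_sum_smul_le _ hg hp C) (mem_convexHull_pi fun k _ => hη k)

end Transforms

namespace UMDAdmissible

variable {𝕜 : Type} [RCLike 𝕜] {X : Type} [NormedAddCommGroup X] [NormedSpace 𝕜 X]
  [NormedSpace ℝ X] [CompleteSpace X] {p : ℝ} {A B : Set 𝕜} {β : ℝ≥0∞}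

theorem mono (hAB : A ⊆ B) (h : UMDAdmissible 𝕜 X p B β) : UMDAdmissible 𝕜 X p A β :=
  fun Ω m μ hμ ℱ f hf hfp N ε hε => h Ω m μ hμ ℱ f hf hfp N ε fun n => hAB (hε n)

theorem smul (c : 𝕜) (h : UMDAdmissible 𝕜 X p B β) :
    UMDAdmissible 𝕜 X p (c • B) (‖c‖ₑ * β) := by
  intro Ω m μ hμ ℱ f hf hfp N ε hε
  choose b hb hbε using hε
  have hε : (fun ω => ∑ k ∈ Finset.range (N + 1), ε k • mdiff f k ω)
      = c • fun ω => ∑ k ∈ Finset.range (N + 1), b k • mdiff f k ω := by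
    funext ω
    simp [← hbε, Finset.smul_sum, smul_smul]
  rw [hε, eLpNorm_const_smul, mul_assoc]
  gcongr
  exact h Ω m μ hμ ℱ f hf hfp N b hb

theorem vadd (hp : 1 ≤ p) (c : 𝕜) (h : UMDAdmissible 𝕜 X p B β) :
    UMDAdmissible 𝕜 X p (c +ᵥ B) (β + ‖c‖ₑ) := by
  intro Ω m μ hμ ℱ f hf hfp N ε hε
  choose b hb hbε using hε
  have hmeas : ∀ n, AEStronglyMeasurable (f n) μ := fun n => (hfp n).aestronglyMeasurable
  have hε : (fun ω => ∑ k ∈ Finset.range (N + 1), ε k • mdiff f k ω)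
      = (fun ω => ∑ k ∈ Finset.range (N + 1), b k • mdiff f k ω) + c • f N := by
    rw [← sum_range_mdiff f N]
    funext ω
    simp [← hbε, add_smul, Finset.sum_add_distrib, Finset.smul_sum, add_comm]
  rw [hε, add_mul]
  refine (eLpNorm_add_le (aestronglyMeasurable_sum_smul _ (aestronglyMeasurable_mdiff hmeas) b)
    ((hmeas N).const_smul c) (ENNReal.one_le_ofReal.mpr hp)).trans ?_
  rw [eLpNorm_const_smul]
  gcongr
  exact h Ω m μ hμ ℱ f hf hfp N b hb

theorem convexHull (hp : 1 ≤ p) (h : UMDAdmissible 𝕜 X p B β) :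
    UMDAdmissible 𝕜 X p (_root_.convexHull ℝ B) β := by
  intro Ω m μ hμ ℱ f hf hfp N ε hε
  have hmeas : ∀ n, AEStronglyMeasurable (f n) μ := fun n => (hfp n).aestronglyMeasurable
  have hfin : ∀ η : ℕ → 𝕜, (fun ω => ∑ k ∈ Finset.range (N + 1), η k • mdiff f k ω)
      = fun ω => ∑ k : Fin (N + 1), η k • mdiff f k ω := fun η =>
    funext fun ω => (Fin.sum_univ_eq_sum_range (fun k => η k • mdiff f k ω) (N + 1)).symm
  rw [hfin]
  refine eLpNorm_sum_smul_le_of_mem_convexHull (g := fun k : Fin (N + 1) => mdiff f k)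
    (η := fun k => ε k) (fun k => aestronglyMeasurable_mdiff hmeas k)
    (ENNReal.one_le_ofReal.mpr hp) (fun η hη => ?_) fun k => hε k
  let η' : ℕ → 𝕜 := fun n => if hn : n < N + 1 then η ⟨n, hn⟩ else η 0
  have hη' : ∀ n, η' n ∈ B := fun n => by unfold η'; split <;> apply hη
  have hη'η : ∀ k : Fin (N + 1), η' k = η k := fun k => dif_pos k.isLt
  have := h Ω m μ hμ ℱ f hf hfp N η' hη'
  rw [hfin] at this
  simpa only [hη'η] using this

theorem closedBall_of_Icc (hp : 1 ≤ p)
    (h : UMDAdmissible 𝕜 X p (((↑) : ℝ → 𝕜) '' Icc (-1) 1) β) :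
    UMDAdmissible 𝕜 X p (Metric.closedBall 0 1) ((1 + ‖(RCLike.I : 𝕜)‖ₑ) * β) := by
  intro Ω m μ hμ ℱ f hf hfp N ε hε
  have hmeas : ∀ n, AEStronglyMeasurable (f n) μ := fun n => (hfp n).aestronglyMeasurable
  have hε1 : ∀ n, ‖ε n‖ ≤ 1 := fun n => mem_closedBall_zero_iff.mp (hε n)
  have hre : ∀ n, ((RCLike.re (ε n) : ℝ) : 𝕜) ∈ ((↑) : ℝ → 𝕜) '' Icc (-1) 1 := fun n =>
    mem_image_of_mem _ (abs_le.mp ((RCLike.abs_re_le_norm _).trans (hε1 n)))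
  have him : ∀ n, ((RCLike.im (ε n) : ℝ) : 𝕜) ∈ ((↑) : ℝ → 𝕜) '' Icc (-1) 1 := fun n =>
    mem_image_of_mem _ (abs_le.mp ((RCLike.abs_im_le_norm _).trans (hε1 n)))
  set T : (ℕ → 𝕜) → Ω → X := fun η ω => ∑ k ∈ Finset.range (N + 1), η k • mdiff f k ω
  have hsplit : T ε = T (fun n => (RCLike.re (ε n) : 𝕜))
      + (RCLike.I : 𝕜) • T (fun n => (RCLike.im (ε n) : 𝕜)) := by
    funext ω
    simp only [T, Pi.add_apply, Pi.smul_apply, Finset.smul_sum, smul_smul,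
      ← Finset.sum_add_distrib, ← add_smul, mul_comm RCLike.I, RCLike.re_add_im]
  calc eLpNorm (T ε) (ENNReal.ofReal p) μ
      ≤ eLpNorm (T fun n => (RCLike.re (ε n) : 𝕜)) (ENNReal.ofReal p) μ
        + ‖(RCLike.I : 𝕜)‖ₑ * eLpNorm (T fun n => (RCLike.im (ε n) : 𝕜)) (ENNReal.ofReal p) μ := by
        rw [hsplit, ← eLpNorm_const_smul]
        exact eLpNorm_add_le (aestronglyMeasurable_sum_smul _ (aestronglyMeasurable_mdiff hmeas) _)
          ((aestronglyMeasurable_sum_smul _ (aestronglyMeasurable_mdiff hmeas) _).const_smul _)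
          (ENNReal.one_le_ofReal.mpr hp)
    _ ≤ β * eLpNorm (f N) (ENNReal.ofReal p) μ
        + ‖(RCLike.I : 𝕜)‖ₑ * (β * eLpNorm (f N) (ENNReal.ofReal p) μ) := by
        gcongr
        exacts [h Ω m μ hμ ℱ f hf hfp N _ hre, h Ω m μ hμ ℱ f hf hfp N _ him]
    _ = (1 + ‖(RCLike.I : 𝕜)‖ₑ) * β * eLpNorm (f N) (ENNReal.ofReal p) μ := by ring

theorem signs_of_pair (hp : 1 ≤ p) {a b : 𝕜} (hab : a ≠ b) (h : UMDAdmissible 𝕜 X p {a, b} β) :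
    UMDAdmissible 𝕜 X p {-1, 1} (‖2 / (a - b)‖ₑ * (β + ‖(a + b) / 2‖ₑ)) := by
  have hsigns : ({-1, 1} : Set 𝕜) ⊆ (2 / (a - b)) • (-((a + b) / 2) +ᵥ {a, b}) := by
    have hab' : a - b ≠ 0 := sub_ne_zero.mpr hab
    rintro z (rfl | rfl)
    · exact ⟨-((a + b) / 2) + b, ⟨b, by simp, rfl⟩, by simp only [smul_eq_mul]; field_simp; ring⟩
    · exact ⟨-((a + b) / 2) + a, ⟨a, by simp, rfl⟩, by simp only [smul_eq_mul]; field_simp; ring⟩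
  rw [← enorm_neg ((a + b) / 2)]
  exact ((h.vadd hp _).smul _).mono hsigns

theorem unitSphere_of_signs (hp : 1 ≤ p) (h : UMDAdmissible 𝕜 X p {-1, 1} β) :
    UMDAdmissible 𝕜 X p {ε : 𝕜 | ‖ε‖ = 1} ((1 + ‖(RCLike.I : 𝕜)‖ₑ) * β) := by
  have hinterval : ((↑) : ℝ → 𝕜) '' Icc (-1) 1 ⊆ _root_.convexHull ℝ {-1, 1} := by
    rw [convexHull_pair, ← segment_eq_Icc (by norm_num : (-1 : ℝ) ≤ 1)]
    rintro _ ⟨t, ⟨x, y, hx, hy, hxy, rfl⟩, rfl⟩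
    exact ⟨x, y, hx, hy, hxy, by simp [RCLike.real_smul_eq_coe_mul]⟩
  exact (((h.convexHull hp).mono hinterval).closedBall_of_Icc hp).mono
    fun ε hε => mem_closedBall_zero_iff.mpr hε.le

theorem of_unitSphere (hp : 1 ≤ p) {M : ℝ} (hM : 0 ≤ M) (hA : A ⊆ Metric.closedBall 0 M)
    (h : UMDAdmissible 𝕜 X p {ε : 𝕜 | ‖ε‖ = 1} β) :
    UMDAdmissible 𝕜 X p A (‖(M : 𝕜)‖ₑ * β) := by
  have hsphere : (M : 𝕜) • {ε : 𝕜 | ‖ε‖ = 1} = Metric.sphere 0 M := by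
    have hunit : {ε : 𝕜 | ‖ε‖ = 1} = Metric.sphere 0 1 := by ext; simp
    rw [hunit, smul_sphere _ _ zero_le_one]
    simp [abs_of_nonneg hM]
  have := (h.smul (M : 𝕜)).convexHull hp
  rw [hsphere, convexHull_sphere_eq_closedBall 0 hM] at this
  exact this.mono hA

end UMDAdmissible

theorem umdConst_ne_top_iff {𝕜 : Type} [RCLike 𝕜] {X : Type} [NormedAddCommGroup X]
    [NormedSpace 𝕜 X] [NormedSpace ℝ X] [CompleteSpace X] {p : ℝ} {A : Set 𝕜} :
    umdConst 𝕜 X p A ≠ ⊤ ↔ ∃ β ≠ ⊤, UMDAdmissible 𝕜 X p A β := by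
  simp only [← lt_top_iff_ne_top, umdConst, sInf_lt_iff, Set.mem_ofPred_eq, and_comm]

theorem umdConst_finite_iff_UMD (𝕜 : Type) [RCLike 𝕜] (X : Type) [NormedAddCommGroup X]
    [NormedSpace 𝕜 X] [NormedSpace ℝ X] [CompleteSpace X] (p : ℝ) (hp : 1 < p)
    (A : Set 𝕜) (hA : Bornology.IsBounded A)
    (htwo : ∃ x ∈ A, ∃ y ∈ A, x ≠ y) :
    umdConst 𝕜 X p A ≠ ⊤ ↔ umdConst 𝕜 X p {ε : 𝕜 | ‖ε‖ = 1} ≠ ⊤ := by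
  simp only [umdConst_ne_top_iff]
  constructor
  · rintro ⟨β, hβ, h⟩
    obtain ⟨a, ha, b, hb, hab⟩ := htwo
    exact ⟨_, by finiteness,
      (((h.mono (pair_subset ha hb)).signs_of_pair hp.le hab).unitSphere_of_signs hp.le)⟩
  · rintro ⟨β, hβ, h⟩
    obtain ⟨M, hM, hAM⟩ := hA.subset_closedBall_lt 0 0
    exact ⟨_, by finiteness, h.of_unitSphere hp.le hM.le hAM⟩
end
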